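/- With a₀,…,a₃ and g₀,…,g₃ as in the tetrahedron setup, for every vector w ∈ ℝ³ one has ∑_{0 ≤ i < j ≤ 3} (−⟨gᵢ, gⱼ⟩) · ⟨w, aⱼ − aᵢ⟩ · (aⱼ − aᵢ) = w. (Lemma 4.5: the local averaging operator Π̄_T¹ w = ∑_{E} ω_E^T (|E|/|T|) l_E(w) τ_E, with ω_E^T = −|T|⟨gᵢ,gⱼ⟩ and l_E(w) = |E| w·τ_E for a constant field w, reproduces constant vector fields.) -/

import Mathlib

/-!
The gradients satisfy `∑ᵢ gᵢ = 0` and `∑ᵢ aᵢ gᵢᵀ = I`: the matrix of edges `aⱼ - a₀` and the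
matrix of gradients `gⱼ` (`j ≥ 1`) are inverse to each other. Hence the Gram matrix
`cᵢⱼ = ⟨gᵢ, gⱼ⟩` has zero row sums, so in `∑ᵢⱼ cᵢⱼ (aⱼ - aᵢ)(aⱼ - aᵢ)ᵀ` only the mixed terms
survive, giving `-2 (∑ⱼ aⱼ gⱼᵀ)(∑ᵢ gᵢ aᵢᵀ) = -2 I`. The sum over `i < j` is half of this
symmetric sum.
-/

open Finset Matrix

section PairSums

variable {ι M : Type*} [Fintype ι] [LinearOrder ι] [AddCommMonoid M]

theorem sum_sum_eq_two_nsmul_sum_sum_lt (f : ι → ι → M) (hsymm : ∀ i j, f j i = f i j)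
    (hdiag : ∀ i, f i i = 0) :
    ∑ i, ∑ j, f i j = 2 • ∑ i, ∑ j, if i < j then f i j else 0 := by
  have hsplit : ∀ i j, f i j = (if i < j then f i j else 0) + if j < i then f j i else 0 := by
    intro i j
    rcases lt_trichotomy i j with h | rfl | h
    · simp [h, h.not_gt]
    · simp [hdiag]
    · simp [h, h.not_gt, hsymm]
  calc ∑ i, ∑ j, f i j
      = ∑ i, ∑ j, ((if i < j then f i j else 0) + if j < i then f j i else 0) :=
        sum_congr rfl fun i _ => sum_congr rfl fun j _ => hsplit i j
    _ = 2 • ∑ i, ∑ j, if i < j then f i j else 0 := by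
        rw [two_nsmul]
        simp only [sum_add_distrib]
        rw [sum_comm (f := fun i j => if j < i then f j i else 0)]

end PairSums

section Laplacian

variable {ι M : Type*} [Fintype ι] [AddCommGroup M] [Module ℝ M]

theorem sum_sum_mul_sub_smul_sub {c : ι → ι → ℝ} (hsymm : ∀ i j, c j i = c i j)
    (hrow : ∀ i, ∑ j, c i j = 0) (u : ι → ℝ) (x : ι → M) :
    ∑ i, ∑ j, (c i j * (u j - u i)) • (x j - x i) = -(2 : ℝ) • ∑ i, ∑ j, (c i j * u i) • x j := by
  have hcol : ∀ j, ∑ i, c i j = 0 := fun j => by simpa only [hsymm] using hrow j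
  have hjj : ∑ i, ∑ j, (c i j * u j) • x j = 0 := by
    rw [sum_comm]
    simp [← sum_smul, ← sum_mul, hcol]
  have hii : ∑ i, ∑ j, (c i j * u i) • x i = 0 := by
    simp [← sum_smul, ← sum_mul, hrow]
  have hswap : ∑ i, ∑ j, (c i j * u j) • x i = ∑ i, ∑ j, (c i j * u i) • x j := by
    rw [sum_comm]
    simp only [hsymm]
  simp only [mul_sub, sub_smul, smul_sub, sum_sub_distrib, hjj, hii, hswap]
  module

end Laplacian

section Barycentric

variable {n : ℕ}

def IsBarycentricGradients (a g : Fin (n + 1) → Fin n → ℝ) : Prop :=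
  ∀ i j k, g i ⬝ᵥ (a j - a k) = (if i = j then 1 else 0) - if i = k then 1 else 0

def edgeMatrix (a : Fin (n + 1) → Fin n → ℝ) : Matrix (Fin n) (Fin n) ℝ :=
  of fun m j => a j.succ m - a 0 m

def succGradMatrix (g : Fin (n + 1) → Fin n → ℝ) : Matrix (Fin n) (Fin n) ℝ :=
  of fun j m => g j.succ m

namespace IsBarycentricGradients

variable {a g : Fin (n + 1) → Fin n → ℝ}

theorem succGradMatrix_mul_edgeMatrix (hg : IsBarycentricGradients a g) :
    succGradMatrix g * edgeMatrix a = 1 := by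
  ext i j
  simpa [mul_apply, one_apply, succGradMatrix, edgeMatrix, dotProduct] using hg i.succ j.succ 0

theorem edgeMatrix_mul_succGradMatrix (hg : IsBarycentricGradients a g) :
    edgeMatrix a * succGradMatrix g = 1 :=
  mul_eq_one_comm.mp (succGradMatrix_mul_edgeMatrix hg)

theorem sum_eq_zero (hg : IsBarycentricGradients a g) : ∑ i, g i = 0 := by
  have hedge : (∑ i, g i) ᵥ* edgeMatrix a = 0 := by
    ext j
    change (∑ i, g i) ⬝ᵥ (a j.succ - a 0) = 0
    rw [sum_dotProduct, sum_congr rfl fun i _ => hg i j.succ 0]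
    simp
  calc ∑ i, g i = (∑ i, g i) ᵥ* (edgeMatrix a * succGradMatrix g) := by
        rw [edgeMatrix_mul_succGradMatrix hg, vecMul_one]
    _ = 0 := by rw [← vecMul_vecMul, hedge, zero_vecMul]

theorem transpose_mul_eq_one (hg : IsBarycentricGradients a g) : (of a)ᵀ * of g = 1 := by
  ext m m'
  have hsum : ∑ i, g i m' = 0 := by simpa using congr_fun (sum_eq_zero hg) m'
  calc ((of a)ᵀ * of g) m m' = ∑ i, (a i m - a 0 m) * g i m' := by
        simp [mul_apply, sub_mul, sum_sub_distrib, ← mul_sum, hsum]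
    _ = (edgeMatrix a * succGradMatrix g) m m' := by
        simp [Fin.sum_univ_succ, mul_apply, edgeMatrix, succGradMatrix]
    _ = (1 : Matrix (Fin n) (Fin n) ℝ) m m' := by rw [edgeMatrix_mul_succGradMatrix hg]

theorem sum_dotProduct_smul_vertex (hg : IsBarycentricGradients a g) (v : Fin n → ℝ) :
    ∑ i, (g i ⬝ᵥ v) • a i = v :=
  calc ∑ i, (g i ⬝ᵥ v) • a i = (of g *ᵥ v) ᵥ* of a := by rw [vecMul_eq_sum]; rfl
    _ = ((of a)ᵀ * of g) *ᵥ v := by rw [← mulVec_mulVec, mulVec_transpose]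
    _ = v := by rw [transpose_mul_eq_one hg, one_mulVec]

theorem sum_dotProduct_vertex_smul (hg : IsBarycentricGradients a g) (w : Fin n → ℝ) :
    ∑ i, (w ⬝ᵥ a i) • g i = w :=
  calc ∑ i, (w ⬝ᵥ a i) • g i = (of a *ᵥ w) ᵥ* of g := by
        rw [vecMul_eq_sum]; simp_rw [dotProduct_comm w]; rfl
    _ = w ᵥ* ((of a)ᵀ * of g) := by rw [← vecMul_vecMul, vecMul_transpose]
    _ = w := by rw [transpose_mul_eq_one hg, vecMul_one]

theorem sum_sum_dotProduct_smul_eq (hg : IsBarycentricGradients a g) (w : Fin n → ℝ) :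
    ∑ i, ∑ j, ((g i ⬝ᵥ g j) * (w ⬝ᵥ a i)) • a j = w := by
  rw [sum_comm]
  calc ∑ j, ∑ i, ((g i ⬝ᵥ g j) * (w ⬝ᵥ a i)) • a j
      = ∑ j, ((∑ i, (w ⬝ᵥ a i) • g i) ⬝ᵥ g j) • a j := by
        simp only [← sum_smul, sum_dotProduct, smul_dotProduct, smul_eq_mul, mul_comm]
    _ = w := by
        simp_rw [sum_dotProduct_vertex_smul hg, dotProduct_comm w]
        exact sum_dotProduct_smul_vertex hg w

theorem sum_sum_lt_neg_dotProduct_smul_eq (hg : IsBarycentricGradients a g) (w : Fin n → ℝ) :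
    (∑ i, ∑ j, if i < j then (-(g i ⬝ᵥ g j) * (w ⬝ᵥ (a j - a i))) • (a j - a i) else 0) = w := by
  have hrow : ∀ i, ∑ j, g i ⬝ᵥ g j = 0 := fun i => by
    rw [← dotProduct_sum, sum_eq_zero hg, dotProduct_zero]
  have hfull : ∑ i, ∑ j, (-(g i ⬝ᵥ g j) * (w ⬝ᵥ (a j - a i))) • (a j - a i) = 2 • w := calc
    _ = -∑ i, ∑ j, ((g i ⬝ᵥ g j) * (w ⬝ᵥ a j - w ⬝ᵥ a i)) • (a j - a i) := by
        simp [neg_mul, neg_smul, dotProduct_sub]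
    _ = (2 : ℝ) • ∑ i, ∑ j, ((g i ⬝ᵥ g j) * (w ⬝ᵥ a i)) • a j := by
        rw [sum_sum_mul_sub_smul_sub (fun i j => dotProduct_comm (g j) (g i)) hrow, neg_smul,
          neg_neg]
    _ = 2 • w := by rw [sum_sum_dotProduct_smul_eq hg, ofNat_smul_eq_nsmul]
  rw [sum_sum_eq_two_nsmul_sum_sum_lt] at hfull
  · exact smul_right_injective _ two_ne_zero hfull
  · intro i j
    rw [dotProduct_comm (g j), ← neg_sub (a j), dotProduct_neg, smul_neg, mul_neg, neg_smul,
      neg_neg]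
  · simp

end IsBarycentricGradients

end Barycentric

theorem stmt_4_general (a : Fin 4 → Fin 3 → ℝ) (g : Fin 4 → Fin 3 → ℝ)
    (hg : ∀ i j k : Fin 4, ∑ m, g i m * (a j m - a k m) =
      (if i = j then (1 : ℝ) else 0) - (if i = k then (1 : ℝ) else 0))
    (w : Fin 3 → ℝ) :
    (∑ i : Fin 4, ∑ j : Fin 4,
        if i < j then
          ((-(∑ m, g i m * g j m)) * ∑ m, w m * (a j m - a i m)) • (a j - a i)
        else 0) = w :=
  IsBarycentricGradients.sum_sum_lt_neg_dotProduct_smul_eq hg w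

/-- Lemma 4.5: for a nondegenerate tetrahedron with vertices `a 0, …, a 3`
and barycentric gradient vectors `g 0, …, g 3` (characterized by
`⟨g i, a j − a k⟩ = δᵢⱼ − δᵢₖ`), the averaging operator reproduces constants:
for every `w ∈ ℝ³`, `∑_{i<j} (−⟨gᵢ,gⱼ⟩) ⟨w, aⱼ−aᵢ⟩ (aⱼ−aᵢ) = w`. -/
theorem stmt_4 (a : Fin 4 → Fin 3 → ℝ) (g : Fin 4 → Fin 3 → ℝ)
    (ha : AffineIndependent ℝ a)
    (hg : ∀ i j k : Fin 4, ∑ m, g i m * (a j m - a k m) =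
      (if i = j then (1 : ℝ) else 0) - (if i = k then (1 : ℝ) else 0))
    (w : Fin 3 → ℝ) :
    (∑ i : Fin 4, ∑ j : Fin 4,
        if i < j then
          ((-(∑ m, g i m * g j m)) * ∑ m, w m * (a j m - a i m)) • (a j - a i)
        else 0) = w :=
  stmt_4_general a g hg w
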